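/- arXiv:2309.06170 — 3 statements merged into one kernel-verified Lean document; each statement's English description precedes it below -/
import Mathlib

section
/- Let Y ⊆ A^d be an affine variety over an algebraically closed field K of characteristic zero with vanishing ideal I(Y) = (f_1, …, f_m) ⊆ K[y_1, …, y_d], let f ∈ K[Y] be a nonconstant regular function, and let f̂ ∈ K[y_1, …, y_d] be any polynomial restricting to f on Y. Then the vanishing ideal of the suspension X = Susp(Y, f) ⊆ A^{d+2} equals (uv − f̂, f_1, …, f_m) ⊆ K[u, v, y_1, …, y_d]; equivalently, the ideal (uv − f̂, f_1, …, f_m) is a radical ideal of K[u, v, y_1, …, y_d]. -/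
open MvPolynomial

namespace ArzhZai

variable {K : Type} [Field K]

/-- A subset of affine space `𝔸^d` is an affine variety if it is the zero locus of an ideal
of polynomials. -/
def IsAffineVariety {d : ℕ} (V : Set (Fin d → K)) : Prop :=
  ∃ I : Ideal (MvPolynomial (Fin d) K), V = MvPolynomial.zeroLocus K I

/-- The differential of a polynomial `p` at a point `x`, as a linear form. -/
noncomputable def diffAt {d : ℕ} (x : Fin d → K) (p : MvPolynomial (Fin d) K) :
    (Fin d → K) →ₗ[K] K where
  toFun v := ∑ i, v i * eval x (pderiv i p)
  map_add' a b := by simp [add_mul, Finset.sum_add_distrib]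
  map_smul' c a := by simp [Finset.mul_sum, mul_assoc]

/-- The Zariski tangent space at a point `x` of the affine scheme (or variety) cut out by the
ideal `J`: the common kernel of the differentials at `x` of all elements of `J`. -/
noncomputable def tangentSpaceAt {d : ℕ} (J : Ideal (MvPolynomial (Fin d) K))
    (x : Fin d → K) : Submodule K (Fin d → K) :=
  ⨅ p ∈ J, LinearMap.ker (diffAt x p)

/-- The affine scheme (or variety) cut out by the ideal `J` is smooth at the closed point `x`
if the dimension of its Zariski tangent space at `x` equals its (Krull) dimension. -/
def SmoothAt {d : ℕ} (J : Ideal (MvPolynomial (Fin d) K)) (x : Fin d → K) : Prop :=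
  (Module.finrank K (tangentSpaceAt J x) : WithBot (WithTop ℕ)) =
    ringKrullDim (MvPolynomial (Fin d) K ⧸ J)

/-- The suspension `Susp(V, f) = {uv = f(y)} ⊆ 𝔸² × V`, with coordinates
`(u, v, y) = (x 0, x 1, (x 2, …))`. -/
def Susp {d : ℕ} (V : Set (Fin d → K)) (f : MvPolynomial (Fin d) K) :
    Set (Fin (d + 2) → K) :=
  {x | (fun i => x i.succ.succ) ∈ V ∧ x 0 * x 1 = eval (fun i => x i.succ.succ) f}

/-- `f` is a nonconstant regular function on `V` (i.e. nonconstant in `K[V]`). -/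
def NonconstOn {d : ℕ} (V : Set (Fin d → K)) (f : MvPolynomial (Fin d) K) : Prop :=
  ∃ x ∈ V, ∃ y ∈ V, eval x f ≠ eval y f

/-- `V` is a homogeneous variety: the group of (biregular) automorphisms of `V`
acts transitively on `V`. -/
def IsHomogeneousVariety {d : ℕ} (V : Set (Fin d → K)) : Prop :=
  ∀ x ∈ V, ∀ y ∈ V, ∃ F G : Fin d → MvPolynomial (Fin d) K,
    (∀ z ∈ V, (fun i => eval z (F i)) ∈ V) ∧
    (∀ z ∈ V, (fun i => eval z (G i)) ∈ V) ∧
    (∀ z ∈ V, (fun i => eval (fun j => eval z (F j)) (G i)) = z) ∧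
    (∀ z ∈ V, (fun i => eval (fun j => eval z (G j)) (F i)) = z) ∧
    (fun i => eval x (F i)) = y

/-- The map `(t, x) ↦ φ_t(x)` of a polynomial family of maps, where the
polynomials `A i` use variable `0` for `t` and variables `i.succ` for `x`. -/
noncomputable def gaOrbitMap {d : ℕ} (A : Fin d → MvPolynomial (Fin (d + 1)) K) (t : K)
    (x : Fin d → K) : Fin d → K :=
  fun i => eval (Fin.cons t x) (A i)

/-- A regular action of the additive group `𝔾ₐ = (K, +)` on `V`, given polynomially. -/
def IsGaAction {d : ℕ} (V : Set (Fin d → K))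
    (A : Fin d → MvPolynomial (Fin (d + 1)) K) : Prop :=
  (∀ t : K, ∀ x ∈ V, gaOrbitMap A t x ∈ V) ∧
  (∀ x ∈ V, gaOrbitMap A 0 x = x) ∧
  (∀ s t : K, ∀ x ∈ V, gaOrbitMap A (s + t) x = gaOrbitMap A s (gaOrbitMap A t x))

/-- `V` is flexible: at every smooth point `x`, the tangent space to `V` is generated by
the tangent vectors at `x` to orbits of `𝔾ₐ`-actions on `V`. -/
def IsFlexible {d : ℕ} (V : Set (Fin d → K)) : Prop :=
  ∀ x ∈ V, SmoothAt (vanishingIdeal K V) x →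
    tangentSpaceAt (vanishingIdeal K V) x =
      Submodule.span K {w | ∃ A : Fin d → MvPolynomial (Fin (d + 1)) K,
        IsGaAction V A ∧ w = fun i => eval (Fin.cons (0 : K) x) (pderiv 0 (A i))}

/-- Evaluation of a polynomial multiplication map. -/
noncomputable def mulEval {N : ℕ} (mul : Fin N → MvPolynomial (Fin (N + N)) K) (g h : Fin N → K) :
    Fin N → K :=
  fun i => eval (Fin.append g h) (mul i)

/-- Evaluation of a polynomial action map. -/
noncomputable def actEval {N d : ℕ} (act : Fin d → MvPolynomial (Fin (N + d)) K) (g : Fin N → K)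
    (x : Fin d → K) : Fin d → K :=
  fun i => eval (Fin.append g x) (act i)

/-- `V` is a homogeneous space: there is an (affine) algebraic group, i.e. an affine variety
`G` with polynomial multiplication and inversion, together with a regular (polynomial)
transitive action of `G` on `V`. -/
def IsHomogeneousSpace {d : ℕ} (V : Set (Fin d → K)) : Prop :=
  ∃ (N : ℕ) (G : Set (Fin N → K)) (mul : Fin N → MvPolynomial (Fin (N + N)) K)
    (inv : Fin N → MvPolynomial (Fin N) K) (e : Fin N → K)
    (act : Fin d → MvPolynomial (Fin (N + d)) K),
    IsAffineVariety G ∧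
    e ∈ G ∧
    (∀ g ∈ G, ∀ h ∈ G, mulEval mul g h ∈ G) ∧
    (∀ g ∈ G, (fun i => eval g (inv i)) ∈ G) ∧
    (∀ g ∈ G, ∀ h ∈ G, ∀ l ∈ G,
      mulEval mul (mulEval mul g h) l = mulEval mul g (mulEval mul h l)) ∧
    (∀ g ∈ G, mulEval mul e g = g ∧ mulEval mul g e = g) ∧
    (∀ g ∈ G, mulEval mul g (fun i => eval g (inv i)) = e ∧
      mulEval mul (fun i => eval g (inv i)) g = e) ∧
    (∀ g ∈ G, ∀ x ∈ V, actEval act g x ∈ V) ∧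
    (∀ x ∈ V, actEval act e x = x) ∧
    (∀ g ∈ G, ∀ h ∈ G, ∀ x ∈ V, actEval act (mulEval mul g h) x = actEval act g (actEval act h x)) ∧
    (∀ x ∈ V, ∀ y ∈ V, ∃ g ∈ G, actEval act g x = y)

end ArzhZai

/-!
Modulo `uv - f̂`, every polynomial in `u, v, y` reduces to a normal form `P(u) + v Q(v)` with
coefficients in `K[y]`: multiplying by `u` or `v` only ever trades `uv` for `f̂`. If the normal
form vanishes on the suspension, then over each `y ∈ Y` the identity `P_y(u) + v Q_y(v) = 0` holds
on the whole hyperbola `uv = f(y)`, which forces `P_y = Q_y = 0` since `K` is infinite. Hence all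
coefficients of `P` and `Q` lie in `I(Y) = (f_1, …, f_m)`.
-/

namespace Polynomial

variable {K : Type*} [Field K]

theorem eval_reflect_comp_C_mul_X {c v : K} (hv : v ≠ 0) (p : K[X]) :
    (reflect (p.comp (C c * X)).natDegree (p.comp (C c * X))).eval v =
      v ^ (p.comp (C c * X)).natDegree * p.eval (c * v⁻¹) := by
  let _ := invertibleOfNonzero (inv_ne_zero hv)
  have h := eval₂_reflect_mul_pow (RingHom.id K) v⁻¹ _ (p.comp (C c * X)) le_rfl
  rw [invOf_eq_inv, inv_inv] at h
  rw [eval, ← mul_inv_cancel_right₀ (pow_ne_zero _ (inv_ne_zero hv)) (eval₂ _ _ _), h, inv_pow,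
    inv_inv, mul_comm]
  simp [eval₂_comp]

theorem eq_zero_of_forall_ne_zero_isRoot [Infinite K] {p : K[X]} (h : ∀ x ≠ 0, p.IsRoot x) :
    p = 0 :=
  p.eq_zero_of_infinite_isRoot <| (Set.finite_singleton 0).infinite_compl.mono fun x hx => h x hx

theorem eq_zero_of_eval_add_mul_eval_eq_zero [Infinite K] {c : K} {p q : K[X]}
    (h : ∀ u v, u * v = c → p.eval u + v * q.eval v = 0) : p = 0 ∧ q = 0 := by
  -- Along `u = c / v`, clearing denominators gives `v^N p(c/v) + v^(N+1) q(v) = 0`, and the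
  -- two summands live in disjoint degree ranges.
  have hq : q = 0 := by
    set r := reflect (p.comp (C c * X)).natDegree (p.comp (C c * X))
    set N := (p.comp (C c * X)).natDegree
    have hsum : r + X ^ (N + 1) * q = 0 := eq_zero_of_forall_ne_zero_isRoot fun v hv => by
      have := h (c * v⁻¹) v (by field_simp)
      simp only [IsRoot, eval_add, eval_mul, eval_pow, eval_X, r, eval_reflect_comp_C_mul_X hv]
      linear_combination v ^ N * this
    by_contra hq
    have hr : r.natDegree ≤ N := natDegree_reflect_le.trans (max_self N).le
    have := congrArg natDegree (add_eq_zero_iff_neg_eq.mp hsum)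
    rw [natDegree_neg, natDegree_X_pow_mul _ hq] at this
    omega
  subst hq
  refine ⟨eq_zero_of_forall_ne_zero_isRoot fun u hu => ?_, rfl⟩
  simpa using h u (c / u) (mul_div_cancel₀ c hu)

variable {R B : Type*} [CommRing R] [CommRing B] (ρ : R →+* B) (u v : B)

noncomputable def splitEval₂ (P Q : R[X]) : B := P.eval₂ ρ u + v * Q.eval₂ ρ v

variable {ρ u v}

theorem splitEval₂_add (P Q P' Q' : R[X]) :
    splitEval₂ ρ u v (P + P') (Q + Q') = splitEval₂ ρ u v P Q + splitEval₂ ρ u v P' Q' := by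
  simp only [splitEval₂, eval₂_add]; ring

theorem splitEval₂_mul_map (P Q : R[X]) (r : R) :
    splitEval₂ ρ u v P Q * ρ r = splitEval₂ ρ u v (P * C r) (Q * C r) := by
  simp only [splitEval₂, eval₂_mul, eval₂_C]; ring

theorem splitEval₂_mul_left {a : R} (huv : u * v = ρ a) (P Q : R[X]) :
    splitEval₂ ρ u v P Q * u = splitEval₂ ρ u v (X * P + C (a * Q.coeff 0)) (C a * Q.divX) := by
  have hQ := congrArg (eval₂ ρ v) Q.X_mul_divX_add
  simp only [eval₂_add, eval₂_mul, eval₂_X, eval₂_C] at hQ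
  simp only [splitEval₂, eval₂_add, eval₂_mul, eval₂_X, eval₂_C, map_mul]
  linear_combination Q.eval₂ ρ v * huv - ρ a * hQ

theorem splitEval₂_mul_right {a : R} (huv : u * v = ρ a) (P Q : R[X]) :
    splitEval₂ ρ u v P Q * v = splitEval₂ ρ u v (C a * P.divX) (C (P.coeff 0) + X * Q) := by
  have hP := congrArg (eval₂ ρ u) P.X_mul_divX_add
  simp only [eval₂_add, eval₂_mul, eval₂_X, eval₂_C] at hP
  simp only [splitEval₂, eval₂_add, eval₂_mul, eval₂_X, eval₂_C]
  linear_combination P.divX.eval₂ ρ u * huv - v * hP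

theorem map_splitEval₂ {B' : Type*} [CommRing B'] (φ : B →+* B') (P Q : R[X]) :
    φ (splitEval₂ ρ u v P Q) = splitEval₂ (φ.comp ρ) (φ u) (φ v) P Q := by
  simp only [splitEval₂, map_add, map_mul, hom_eval₂]

theorem splitEval₂_mem_map {I : Ideal R} {P Q : R[X]} (hP : P ∈ I.map C) (hQ : Q ∈ I.map C) :
    splitEval₂ ρ u v P Q ∈ I.map ρ := by
  have key : ∀ w : B, ∀ F ∈ I.map (C : R →+* R[X]), F.eval₂ ρ w ∈ I.map ρ := fun w F hF => by
    simpa only [Ideal.map_map, eval₂RingHom_comp_C, coe_eval₂RingHom] using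
      Ideal.mem_map_of_mem (eval₂RingHom ρ w) hF
  exact add_mem (key u P hP) (Ideal.mul_mem_left _ v (key v Q hQ))

end Polynomial

namespace ArzhZai

open Polynomial (splitEval₂ splitEval₂_add splitEval₂_mul_map splitEval₂_mul_left
  splitEval₂_mul_right splitEval₂_mem_map map_splitEval₂ eq_zero_of_eval_add_mul_eval_eq_zero)

section

variable {K : Type} [Field K] {d : ℕ}

noncomputable abbrev renameSuccSucc : MvPolynomial (Fin d) K →+* MvPolynomial (Fin (d + 2)) K :=
  (rename (Fin.succ ∘ Fin.succ)).toRingHom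

theorem exists_sub_splitEval₂_mem_span (a : MvPolynomial (Fin d) K)
    (g : MvPolynomial (Fin (d + 2)) K) :
    ∃ P Q, g - splitEval₂ renameSuccSucc (X 0) (X 1) P Q ∈
      Ideal.span {X 0 * X 1 - renameSuccSucc a} := by
  set π := Ideal.Quotient.mk (Ideal.span {X 0 * X 1 - renameSuccSucc a})
  have huv : π (X 0) * π (X 1) = (π.comp renameSuccSucc) a := by
    rw [← map_mul, RingHom.comp_apply, Ideal.Quotient.mk_eq_mk_iff_sub_mem]
    exact Ideal.mem_span_singleton_self _
  suffices ∃ P Q, π g = splitEval₂ (π.comp renameSuccSucc) (π (X 0)) (π (X 1)) P Q by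
    obtain ⟨P, Q, h⟩ := this
    exact ⟨P, Q, Ideal.Quotient.eq.mp (h.trans (map_splitEval₂ π P Q).symm)⟩
  induction g using MvPolynomial.induction_on with
  | C c => exact ⟨Polynomial.C (C c), 0, by simp [splitEval₂]⟩
  | add g g' hg hg' =>
    obtain ⟨P, Q, h⟩ := hg
    obtain ⟨P', Q', h'⟩ := hg'
    exact ⟨P + P', Q + Q', by rw [map_add, h, h', splitEval₂_add]⟩
  | mul_X g i hg =>
    obtain ⟨P, Q, h⟩ := hg
    rw [map_mul, h]
    refine Fin.cases ⟨_, _, splitEval₂_mul_left huv P Q⟩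
      (Fin.cases ⟨_, _, splitEval₂_mul_right huv P Q⟩ fun k => ⟨P * .C (X k), Q * .C (X k), ?_⟩) i
    rw [show π (X k.succ.succ) = (π.comp renameSuccSucc) (X k) by simp]
    exact splitEval₂_mul_map P Q _

theorem eval_renameSuccSucc (x : Fin (d + 2) → K) (p : MvPolynomial (Fin d) K) :
    eval x (renameSuccSucc p) = eval (fun i => x i.succ.succ) p :=
  eval_rename _ _ _

theorem cons_cons_mem_susp_iff {Y : Set (Fin d → K)} {f : MvPolynomial (Fin d) K} {u v : K}
    {y : Fin d → K} :
    (Fin.cons u (Fin.cons v y) : Fin (d + 2) → K) ∈ Susp Y f ↔ y ∈ Y ∧ u * v = eval y f := by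
  simp [Susp]

theorem eval_cons_cons_comp_renameSuccSucc (u v : K) (y : Fin d → K) :
    (eval (Fin.cons u (Fin.cons v y) : Fin (d + 2) → K)).comp renameSuccSucc = eval y := by
  refine RingHom.ext fun p => ?_
  simp only [RingHom.comp_apply, eval_renameSuccSucc, Fin.cons_succ]

theorem mem_map_C_of_splitEval₂_mem_vanishingIdeal_susp [Infinite K] {Y : Set (Fin d → K)}
    {f : MvPolynomial (Fin d) K} {P Q : Polynomial (MvPolynomial (Fin d) K)}
    (h : splitEval₂ renameSuccSucc (X 0) (X 1) P Q ∈ vanishingIdeal K (Susp Y f)) :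
    P ∈ (vanishingIdeal K Y).map Polynomial.C ∧ Q ∈ (vanishingIdeal K Y).map Polynomial.C := by
  have hfiber : ∀ y ∈ Y, P.map (eval y) = 0 ∧ Q.map (eval y) = 0 := fun y hy =>
    eq_zero_of_eval_add_mul_eval_eq_zero fun u v huv => by
      have := mem_vanishingIdeal_iff.mp h _ (cons_cons_mem_susp_iff.mpr ⟨hy, huv⟩)
      rw [aeval_eq_eval, map_splitEval₂, eval_cons_cons_comp_renameSuccSucc, eval_X, eval_X,
        Fin.cons_zero, Fin.cons_one, Fin.cons_zero] at this
      rwa [Polynomial.eval_map, Polynomial.eval_map]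
  simp only [Ideal.mem_map_C_iff, mem_vanishingIdeal_iff]
  exact ⟨fun n y hy => by simpa using congr(Polynomial.coeff $((hfiber y hy).1) n),
    fun n y hy => by simpa using congr(Polynomial.coeff $((hfiber y hy).2) n)⟩

theorem span_le_vanishingIdeal_susp {Y : Set (Fin d → K)} {f fhat : MvPolynomial (Fin d) K}
    (hlift : ∀ y ∈ Y, eval y fhat = eval y f) :
    Ideal.span {X 0 * X 1 - renameSuccSucc fhat} ≤ vanishingIdeal K (Susp Y f) := by
  rw [Ideal.span_singleton_le_iff_mem, mem_vanishingIdeal_iff]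
  rintro x ⟨hxY, hx⟩
  rw [aeval_eq_eval, map_sub, map_mul, eval_X, eval_X, eval_renameSuccSucc, hlift _ hxY, hx,
    sub_self]

theorem map_vanishingIdeal_le_vanishingIdeal_susp {Y : Set (Fin d → K)}
    {f : MvPolynomial (Fin d) K} :
    (vanishingIdeal K Y).map renameSuccSucc ≤ vanishingIdeal K (Susp Y f) := by
  rw [Ideal.map_le_iff_le_comap]
  intro p hp
  rw [Ideal.mem_comap, mem_vanishingIdeal_iff]
  rintro x ⟨hxY, -⟩
  rw [aeval_eq_eval, eval_renameSuccSucc, ← aeval_eq_eval]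
  exact mem_vanishingIdeal_iff.mp hp _ hxY

end

theorem vanishingIdeal_susp_general
    {K : Type} [Field K] [IsAlgClosed K] {d m : ℕ}
    (Y : Set (Fin d → K)) (fs : Fin m → MvPolynomial (Fin d) K)
    (f fhat : MvPolynomial (Fin d) K)
    (hgen : vanishingIdeal K Y = Ideal.span (Set.range fs))
    (hlift : ∀ y ∈ Y, eval y fhat = eval y f) :
    vanishingIdeal K (Susp Y f) =
      Ideal.span
        ({MvPolynomial.X 0 * MvPolynomial.X 1 -
            rename (Fin.succ ∘ Fin.succ) fhat} ∪
          Set.range fun i => rename (Fin.succ ∘ Fin.succ) (fs i) :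
          Set (MvPolynomial (Fin (d + 2)) K)) := by
  have hgens : Ideal.span (Set.range fun i => rename (Fin.succ ∘ Fin.succ) (fs i)) =
      (vanishingIdeal K Y).map renameSuccSucc := by
    rw [hgen, Ideal.map_span, ← Set.range_comp]
    rfl
  rw [Ideal.span_union, hgens]
  refine le_antisymm (fun g hg => ?_)
    (sup_le (span_le_vanishingIdeal_susp hlift) map_vanishingIdeal_le_vanishingIdeal_susp)
  obtain ⟨P, Q, hPQ⟩ := exists_sub_splitEval₂_mem_span fhat g
  have hsplit : splitEval₂ renameSuccSucc (X 0) (X 1) P Q ∈ vanishingIdeal K (Susp Y f) := by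
    simpa using sub_mem hg (span_le_vanishingIdeal_susp hlift hPQ)
  obtain ⟨hP, hQ⟩ := mem_map_C_of_splitEval₂_mem_vanishingIdeal_susp hsplit
  rw [← sub_add_cancel g (splitEval₂ renameSuccSucc (X 0) (X 1) P Q)]
  exact add_mem (Ideal.mem_sup_left hPQ)
    (Ideal.mem_sup_right (splitEval₂_mem_map hP hQ))

/-- Lemma `susp_ideal_lem`: if `I(Y) = (f_1, …, f_m)` and `f̂` is any
polynomial restricting to the function `f` on `Y`, then the vanishing ideal of the
suspension `Susp(Y, f) ⊆ 𝔸^{d+2}` is `(uv - f̂, f_1, …, f_m)`. -/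
theorem vanishingIdeal_susp
    {K : Type} [Field K] [IsAlgClosed K] [CharZero K] {d m : ℕ}
    (Y : Set (Fin d → K)) (fs : Fin m → MvPolynomial (Fin d) K)
    (f fhat : MvPolynomial (Fin d) K)
    (hY : IsAffineVariety Y)
    (hgen : vanishingIdeal K Y = Ideal.span (Set.range fs))
    (hf : NonconstOn Y f)
    (hlift : ∀ y ∈ Y, eval y fhat = eval y f) :
    vanishingIdeal K (Susp Y f) =
      Ideal.span
        ({MvPolynomial.X 0 * MvPolynomial.X 1 -
            rename (Fin.succ ∘ Fin.succ) fhat} ∪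
          Set.range fun i => rename (Fin.succ ∘ Fin.succ) (fs i) :
          Set (MvPolynomial (Fin (d + 2)) K)) :=
  vanishingIdeal_susp_general Y fs f fhat hgen hlift

end ArzhZai
end

section
/- Let K be an algebraically closed field of characteristic zero, let f(y) = α(y − y_0)(y − y_1)⋯(y − y_d) ∈ K[y] with α ∈ K^× and pairwise distinct roots y_0, …, y_d ∈ K, and let X = {xz = f(y)} ⊆ A^3. Set D = {z = 0, y = y_1} ∪ … ∪ {z = 0, y = y_d} ⊆ X and U = X ∖ D. Then U is an affine variety, the rational function h = x/(α(y−y_1)⋯(y−y_d)) = (y − y_0)/z is regular on U, the algebra K[U] is generated by h and z, and U is isomorphic to the affine plane A^2. -/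
/-!
Write `f(y) = (y - y₀) e(y)` with `e(y) = α (y - y₁) ⋯ (y - y_d)`. On `U` the two expressions
`(y - y₀)/z` and `x/e(y)` glue to a regular function `h`, since `e(y₀) ≠ 0` and `z = 0` forces
`y = y₀` on `U`. The polynomial map `(h, z) ↦ (h e(y₀ + hz), y₀ + hz, z)` lands in `U` and is
inverse to `(h, z)`, so `U ≅ 𝔸²`, and regular functions on `U` pull back to regular functions
on `𝔸²`. These are polynomials: the denominators `b` of a regular function `ψ` on `𝔸ⁿ`, i.e.
those with `ψ b` polynomial, form an ideal containing a local denominator at every point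
(two local fractions agree as polynomials, `K` being infinite), so by the weak
Nullstellensatz it contains `1`.
-/

open MvPolynomial

namespace ArzhZai

/-- A `K`-valued function `φ` is regular on a subset `V ⊆ 𝔸^d` if at every point of `V` it
can be written as a ratio of polynomials whose denominator does not vanish there. -/
def IsRegularOn {K : Type} [Field K] {d : ℕ} (V : Set (Fin d → K))
    (φ : (Fin d → K) → K) : Prop :=
  ∀ q ∈ V, ∃ a b : MvPolynomial (Fin d) K, eval q b ≠ 0 ∧
    ∀ q' ∈ V, eval q' b ≠ 0 → φ q' * eval q' b = eval q' a

section RegularFunctions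

variable {K : Type} [Field K] {m n : ℕ}

lemma eval_bind₁_eq (w : Fin n → K) (G : Fin m → MvPolynomial (Fin n) K)
    (p : MvPolynomial (Fin m) K) :
    eval w (bind₁ G p) = eval (fun i => eval w (G i)) p := by
  simpa using eval₂Hom_bind₁ (RingHom.id K) w G p

lemma IsRegularOn.comp_polynomialMap {U : Set (Fin m → K)} {V : Set (Fin n → K)}
    {φ : (Fin m → K) → K} (hφ : IsRegularOn U φ) (G : Fin m → MvPolynomial (Fin n) K)
    (hG : ∀ w ∈ V, (fun i => eval w (G i)) ∈ U) :
    IsRegularOn V fun w => φ fun i => eval w (G i) := by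
  intro w hw
  obtain ⟨a, b, hb, hab⟩ := hφ _ (hG w hw)
  refine ⟨bind₁ G a, bind₁ G b, by rwa [eval_bind₁_eq], fun w' hw' hbw' => ?_⟩
  rw [eval_bind₁_eq] at hbw' ⊢
  rw [eval_bind₁_eq]
  exact hab _ (hG w' hw') hbw'

lemma mul_eq_mul_of_fractions {ψ : (Fin n → K) → K} [Infinite K]
    {a₁ b₁ a₂ b₂ : MvPolynomial (Fin n) K} (hb₁ : b₁ ≠ 0) (hb₂ : b₂ ≠ 0)
    (h₁ : ∀ w, eval w b₁ ≠ 0 → ψ w * eval w b₁ = eval w a₁)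
    (h₂ : ∀ w, eval w b₂ ≠ 0 → ψ w * eval w b₂ = eval w a₂) :
    a₁ * b₂ = a₂ * b₁ := by
  have hvanish : (a₁ * b₂ - a₂ * b₁) * (b₁ * b₂) = 0 := by
    refine MvPolynomial.funext fun w => ?_
    simp only [map_mul, map_sub, map_zero]
    by_cases hw₁ : eval w b₁ = 0
    · rw [hw₁]; ring
    by_cases hw₂ : eval w b₂ = 0
    · rw [hw₂]; ring
    rw [← h₁ w hw₁, ← h₂ w hw₂]; ring
  exact sub_eq_zero.mp ((mul_eq_zero.mp hvanish).resolve_right (mul_ne_zero hb₁ hb₂))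

def denominatorIdeal (ψ : (Fin n → K) → K) : Ideal (MvPolynomial (Fin n) K) where
  carrier := {b | ∃ a : MvPolynomial (Fin n) K, ∀ w, ψ w * eval w b = eval w a}
  zero_mem' := ⟨0, by simp⟩
  add_mem' := by
    rintro b₁ b₂ ⟨a₁, h₁⟩ ⟨a₂, h₂⟩
    exact ⟨a₁ + a₂, fun w => by simp only [map_add, mul_add, h₁, h₂]⟩
  smul_mem' := by
    rintro c b ⟨a, h⟩
    exact ⟨c * a, fun w => by simp only [smul_eq_mul, map_mul, ← h]; ring⟩

lemma mem_denominatorIdeal_of_isRegularOn_univ [Infinite K] {ψ : (Fin n → K) → K}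
    (hψ : IsRegularOn Set.univ ψ) {a b : MvPolynomial (Fin n) K} (hb : b ≠ 0)
    (hab : ∀ w, eval w b ≠ 0 → ψ w * eval w b = eval w a) :
    b ∈ denominatorIdeal ψ := by
  refine ⟨a, fun w => ?_⟩
  obtain ⟨a', b', hb'w, hab'⟩ := hψ w trivial
  have hb' : b' ≠ 0 := fun h => hb'w (by simp [h])
  have hcross := congrArg (eval w)
    (mul_eq_mul_of_fractions hb hb' hab fun w' => hab' w' trivial)
  simp only [map_mul, ← hab' w trivial hb'w] at hcross
  exact mul_right_cancel₀ hb'w (by rw [hcross]; ring)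

/-- Weak Nullstellensatz. -/
lemma span_eq_top_of_forall_exists_eval_ne_zero [IsAlgClosed K]
    {S : Set (MvPolynomial (Fin n) K)} (hS : ∀ w, ∃ p ∈ S, eval w p ≠ 0) :
    Ideal.span S = ⊤ := by
  have hempty : zeroLocus K (Ideal.span S) = ∅ := by
    rw [zeroLocus_span, Set.eq_empty_iff_forall_notMem]
    intro w hw
    obtain ⟨p, hp, hpw⟩ := hS w
    exact hpw (by simpa [coe_aeval_eq_eval] using hw p hp)
  have := vanishingIdeal_zeroLocus_eq_radical (K := K) (Ideal.span S)
  rw [hempty, vanishingIdeal_empty] at this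
  exact Ideal.radical_eq_top.mp this.symm

lemma exists_polynomial_of_isRegularOn_univ [IsAlgClosed K] {ψ : (Fin n → K) → K}
    (hψ : IsRegularOn Set.univ ψ) : ∃ P : MvPolynomial (Fin n) K, ∀ w, ψ w = eval w P := by
  choose A B hB hAB using fun w => hψ w trivial
  have hspan : Ideal.span (Set.range B) ≤ denominatorIdeal ψ := by
    refine Ideal.span_le.mpr ?_
    rintro _ ⟨w, rfl⟩
    exact mem_denominatorIdeal_of_isRegularOn_univ hψ (fun h => hB w (by simp [h]))
      fun w' => hAB w w' trivial
  rw [span_eq_top_of_forall_exists_eval_ne_zero (S := Set.range B)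
    fun w => ⟨B w, ⟨w, rfl⟩, hB w⟩, top_le_iff] at hspan
  obtain ⟨P, hP⟩ : (1 : MvPolynomial (Fin n) K) ∈ denominatorIdeal ψ := by
    rw [hspan]; trivial
  exact ⟨P, fun w => by simpa using hP w⟩

lemma exists_polynomial_of_isRegularOn_of_leftInverse [IsAlgClosed K] {U : Set (Fin m → K)}
    (G : Fin m → MvPolynomial (Fin n) K) (F : (Fin m → K) → Fin n → K)
    (hGU : ∀ w, (fun i => eval w (G i)) ∈ U) (hGF : ∀ q ∈ U, (fun i => eval (F q) (G i)) = q)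
    {φ : (Fin m → K) → K} (hφ : IsRegularOn U φ) :
    ∃ P : MvPolynomial (Fin n) K, ∀ q ∈ U, φ q = eval (F q) P := by
  obtain ⟨P, hP⟩ := exists_polynomial_of_isRegularOn_univ
    (hφ.comp_polynomialMap G fun w _ => hGU w)
  exact ⟨P, fun q hq => by rw [← hP, hGF q hq]⟩

end RegularFunctions

section Danielewski

variable {K : Type} [Field K] {d : ℕ} (α : K) (r : Fin (d + 1) → K)

/-- `U = X ∖ D`. -/
def danielewskiComplement : Set (Fin 3 → K) :=
  {q | q 0 * q 2 = α * ∏ i, (q 1 - r i) ∧ ¬(q 2 = 0 ∧ ∃ i : Fin d, q 1 = r i.succ)}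

def cofactor (y : K) : K := α * ∏ i : Fin d, (y - r i.succ)

open Classical in
noncomputable def danielewskiH (q : Fin 3 → K) : K :=
  if q 2 = 0 then q 0 / cofactor α r (q 1) else (q 1 - r 0) / q 2

noncomputable def danielewskiInv : Fin 3 → MvPolynomial (Fin 2) K :=
  ![X 0 * (C α * ∏ i : Fin d, (C (r 0) + X 0 * X 1 - C (r i.succ))), C (r 0) + X 0 * X 1, X 1]

variable {α r}

lemma sub_mul_cofactor (y : K) : (y - r 0) * cofactor α r y = α * ∏ i, (y - r i) := by
  rw [cofactor, Fin.prod_univ_succ]; ring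

lemma cofactor_ne_zero (hα : α ≠ 0) (hr : Function.Injective r) : cofactor α r (r 0) ≠ 0 :=
  mul_ne_zero hα <| Finset.prod_ne_zero_iff.mpr fun i _ =>
    sub_ne_zero.mpr fun h => Fin.succ_ne_zero i (hr h).symm

lemma eq_root_of_mem_danielewskiComplement (hα : α ≠ 0) {q : Fin 3 → K}
    (hq : q ∈ danielewskiComplement α r) (hz : q 2 = 0) : q 1 = r 0 := by
  obtain ⟨hX, hD⟩ := hq
  rw [hz, mul_zero, eq_comm, mul_eq_zero, or_iff_right hα, Finset.prod_eq_zero_iff] at hX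
  obtain ⟨i, -, hi⟩ := hX
  cases i using Fin.cases with
  | zero => exact sub_eq_zero.mp hi
  | succ j => exact absurd ⟨hz, j, sub_eq_zero.mp hi⟩ hD

lemma danielewskiH_mul_z (hα : α ≠ 0) {q : Fin 3 → K} (hq : q ∈ danielewskiComplement α r) :
    danielewskiH α r q * q 2 = q 1 - r 0 := by
  by_cases hz : q 2 = 0
  · rw [hz, mul_zero, eq_root_of_mem_danielewskiComplement hα hq hz, sub_self]
  · rw [danielewskiH, if_neg hz, div_mul_cancel₀ _ hz]

lemma danielewskiH_mul_cofactor (hα : α ≠ 0) (hr : Function.Injective r) {q : Fin 3 → K}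
    (hq : q ∈ danielewskiComplement α r) :
    danielewskiH α r q * cofactor α r (q 1) = q 0 := by
  by_cases hz : q 2 = 0
  · have hcof : cofactor α r (q 1) ≠ 0 := by
      rw [eq_root_of_mem_danielewskiComplement hα hq hz]
      exact cofactor_ne_zero hα hr
    rw [danielewskiH, if_pos hz, div_mul_cancel₀ _ hcof]
  · have hX := hq.1
    rw [← sub_mul_cofactor] at hX
    rw [danielewskiH, if_neg hz, div_mul_eq_mul_div, div_eq_iff hz, ← hX]

lemma isRegularOn_danielewskiH (hα : α ≠ 0) (hr : Function.Injective r) :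
    IsRegularOn (danielewskiComplement α r) (danielewskiH α r) := by
  intro q hq
  by_cases hz : q 2 = 0
  · refine ⟨X 0, C α * ∏ i : Fin d, (X 1 - C (r i.succ)), ?_, fun q' hq' _ => ?_⟩
    · simpa [cofactor, eq_root_of_mem_danielewskiComplement hα hq hz] using
        cofactor_ne_zero hα hr
    · simpa [cofactor] using danielewskiH_mul_cofactor hα hr hq'
  · exact ⟨X 1 - C (r 0), X 2, by simpa using hz,
      fun q' hq' _ => by simpa using danielewskiH_mul_z hα hq'⟩

lemma eval_danielewskiInv (w : Fin 2 → K) :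
    (fun i => eval w (danielewskiInv α r i)) =
      ![w 0 * cofactor α r (r 0 + w 0 * w 1), r 0 + w 0 * w 1, w 1] := by
  ext i
  fin_cases i <;> simp [danielewskiInv, cofactor]

lemma eval_danielewskiInv_mem (hr : Function.Injective r) (w : Fin 2 → K) :
    (fun i => eval w (danielewskiInv α r i)) ∈ danielewskiComplement α r := by
  rw [eval_danielewskiInv]
  refine ⟨?_, ?_⟩
  · simp only [Matrix.cons_val_zero, Matrix.cons_val_one, Matrix.cons_val_two,
      Matrix.head_cons, Matrix.tail_cons]
    rw [← sub_mul_cofactor, add_sub_cancel_left]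
    ring
  · rintro ⟨hz, i, hy⟩
    simp only [Matrix.cons_val_one, Matrix.cons_val_two, Matrix.head_cons, Matrix.tail_cons]
      at hz hy
    rw [hz, mul_zero, add_zero] at hy
    exact Fin.succ_ne_zero i (hr hy.symm)

lemma eval_danielewskiInv_danielewskiH (hα : α ≠ 0) (hr : Function.Injective r)
    {q : Fin 3 → K} (hq : q ∈ danielewskiComplement α r) :
    (fun i => eval ![danielewskiH α r q, q 2] (danielewskiInv α r i)) = q := by
  have hy : r 0 + danielewskiH α r q * q 2 = q 1 := by
    rw [danielewskiH_mul_z hα hq]; ring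
  rw [eval_danielewskiInv]
  ext i
  fin_cases i
  · simpa [hy] using danielewskiH_mul_cofactor hα hr hq
  · simpa using hy
  · simp

lemma danielewskiH_eval_danielewskiInv (hα : α ≠ 0) (hr : Function.Injective r)
    (w : Fin 2 → K) :
    ![danielewskiH α r fun i => eval w (danielewskiInv α r i),
      eval w (danielewskiInv α r 2)] = w := by
  have hh : danielewskiH α r (fun i => eval w (danielewskiInv α r i)) = w 0 := by
    rw [eval_danielewskiInv]
    by_cases hz : w 1 = 0
    · rw [danielewskiH, if_pos (by simpa using hz)]
      simp [hz, mul_div_cancel_right₀ _ (cofactor_ne_zero hα hr)]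
    · rw [danielewskiH, if_neg (by simpa using hz)]
      simp [mul_div_cancel_right₀ _ hz]
  ext i
  fin_cases i
  · simpa using hh
  · simp [danielewskiInv]

end Danielewski

theorem danielewski_complement_affine_plane_general
    {K : Type} [Field K] [IsAlgClosed K] (d : ℕ)
    (α : K) (hα : α ≠ 0) (r : Fin (d + 1) → K) (hr : Function.Injective r)
    (X : Set (Fin 3 → K)) (hX : X = {q | q 0 * q 2 = α * ∏ i, (q 1 - r i)})
    (D : Set (Fin 3 → K)) (hD : D = {q ∈ X | q 2 = 0 ∧ ∃ i : Fin d, q 1 = r i.succ})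
    (U : Set (Fin 3 → K)) (hU : U = X \ D) :
    ∃ h : (Fin 3 → K) → K,
      IsRegularOn U h ∧
      (∀ q ∈ U, h q * q 2 = q 1 - r 0) ∧
      (∀ q ∈ U, h q * (α * ∏ i : Fin d, (q 1 - r i.succ)) = q 0) ∧
      (∀ φ : (Fin 3 → K) → K, IsRegularOn U φ →
        ∃ P : MvPolynomial (Fin 2) K, ∀ q ∈ U, φ q = eval ![h q, q 2] P) ∧
      (∃ G : Fin 3 → MvPolynomial (Fin 2) K,
        (∀ w : Fin 2 → K, (fun i => eval w (G i)) ∈ U) ∧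
        (∀ q ∈ U, (fun i => eval ![h q, q 2] (G i)) = q) ∧
        (∀ w : Fin 2 → K, ![h fun i => eval w (G i), (fun i => eval w (G i)) 2] = w)) := by
  obtain rfl : U = danielewskiComplement α r := by
    subst hX hD hU
    ext q
    simp only [danielewskiComplement, Set.mem_sdiff, Set.mem_ofPred_eq]
    tauto
  have hGU := eval_danielewskiInv_mem (α := α) hr
  have hGF := fun q (hq : q ∈ danielewskiComplement α r) =>
    eval_danielewskiInv_danielewskiH hα hr hq
  exact ⟨danielewskiH α r, isRegularOn_danielewskiH hα hr,
    fun q hq => danielewskiH_mul_z hα hq, fun q hq => danielewskiH_mul_cofactor hα hr hq,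
    fun φ hφ => exists_polynomial_of_isRegularOn_of_leftInverse _ _ hGU hGF hφ,
    danielewskiInv α r, hGU, hGF, danielewskiH_eval_danielewskiInv hα hr⟩

/-- for the Danielewski surface `X = {xz = α(y-y₀)⋯(y-y_d)}` with
pairwise distinct roots, `D = ⋃_{i=1}^{d} {z = 0, y = y_i}` and `U = X ∖ D`, the function
`h = x/(α(y-y₁)⋯(y-y_d)) = (y-y₀)/z` is regular on `U`, the algebra `K[U]` of regular
functions on `U` is generated by `h` and `z`, and `(h, z)` defines an isomorphism of `U`
onto the affine plane `𝔸²` (whose polynomial inverse is `G`); in particular `U` is an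
affine variety. Coordinates on `𝔸³` are `(x, y, z) = (q 0, q 1, q 2)`. -/
theorem danielewski_complement_affine_plane
    {K : Type} [Field K] [IsAlgClosed K] [CharZero K] (d : ℕ)
    (α : K) (hα : α ≠ 0) (r : Fin (d + 1) → K) (hr : Function.Injective r)
    (X : Set (Fin 3 → K)) (hX : X = {q | q 0 * q 2 = α * ∏ i, (q 1 - r i)})
    (D : Set (Fin 3 → K)) (hD : D = {q ∈ X | q 2 = 0 ∧ ∃ i : Fin d, q 1 = r i.succ})
    (U : Set (Fin 3 → K)) (hU : U = X \ D) :
    ∃ h : (Fin 3 → K) → K,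
      IsRegularOn U h ∧
      (∀ q ∈ U, h q * q 2 = q 1 - r 0) ∧
      (∀ q ∈ U, h q * (α * ∏ i : Fin d, (q 1 - r i.succ)) = q 0) ∧
      (∀ φ : (Fin 3 → K) → K, IsRegularOn U φ →
        ∃ P : MvPolynomial (Fin 2) K, ∀ q ∈ U, φ q = eval ![h q, q 2] P) ∧
      (∃ G : Fin 3 → MvPolynomial (Fin 2) K,
        (∀ w : Fin 2 → K, (fun i => eval w (G i)) ∈ U) ∧
        (∀ q ∈ U, (fun i => eval ![h q, q 2] (G i)) = q) ∧
        (∀ w : Fin 2 → K, ![h fun i => eval w (G i), (fun i => eval w (G i)) 2] = w)) :=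
  danielewski_complement_affine_plane_general d α hα r hr X hX D hD U hU

end ArzhZai
end

section
/- Let K be an algebraically closed field of characteristic zero and let X ⊆ A^{n+1} be the smooth hypersurface uv = y_1 · p_1(y) ⋯ p_d(y), where y = (y_1, …, y_{n−1}) and p_1, …, p_d ∈ K[y] are irreducible. Set D = {v = 0, p_1 = 0} ∪ … ∪ {v = 0, p_d = 0} ⊆ X and U = X ∖ D. Then U is an affine variety, the rational function h = u/(p_1(y)⋯p_d(y)) = y_1/v is regular on U, the algebra K[U] is generated by the n functions h, v, y_2, …, y_{n−1}, and U is isomorphic to the affine space A^n. -/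
/-!
Smoothness of `X` forces `P = p₁ ⋯ p_d` to have no zero on the hyperplane `{y₁ = 0}`: at a point
`(0, 0, y)` with `y₁ = 0 = P(y)` the tangent space of `X` is all of `𝔸^{n+1}`, whereas at
`(0, 1, 0)` the differential of `uv - y₁ P` cuts it down, and smoothness makes the two dimensions
equal. Hence `h = u / P` near `{v = 0}` and `h = y₁ / v` away from it glue to a regular function
on `U`, and `(h, v, y₂, …) ↦ (h P(hv, y₂, …), v, hv, y₂, …)` is a polynomial inverse of
`(h, v, y₂, …)` on `U`. Through this isomorphism a regular function on `U` becomes a regular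
function on `𝔸ⁿ`, which is a polynomial by the Nullstellensatz.
-/

open MvPolynomial

namespace ArzhZai

/-- The map `q ↦ (h(q), v, y₂, …, y_{n-1})` on `X ⊆ 𝔸^{n+1}`, where the ambient coordinates
are `(u, v, y₁, …, y_{n-1}) = (q 0, q 1, q 2, …)` (with `n - 1 = m + 1` variables `y`). -/
def coordMap {K : Type} [Field K] {m : ℕ} (h : (Fin (m + 3) → K) → K)
    (q : Fin (m + 3) → K) : Fin (m + 2) → K :=
  Fin.cons (h q) (Fin.cons (q 1) (fun j : Fin m => q j.succ.succ.succ))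

open Polynomial (derivative)

@[simp]
theorem cons_cons_apply_two {α : Type*} {n : ℕ} (u v : α) (y : Fin (n + 1) → α) :
    (Fin.cons u (Fin.cons v y : Fin (n + 2) → α) : Fin (n + 3) → α) 2 = y 0 :=
  rfl

section TangentSpace

theorem derivative_aeval {R σ : Type*} [CommRing R] [Fintype σ] (γ : σ → Polynomial R)
    (r : MvPolynomial σ R) :
    derivative (aeval γ r) = ∑ i, derivative (γ i) * aeval γ (pderiv i r) := by
  classical
  induction r using MvPolynomial.induction_on with
  | C a => simp
  | add p q hp hq =>
    simp only [map_add, hp, hq, mul_add, Finset.sum_add_distrib]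
  | mul_X p i hp =>
    simp only [map_mul, aeval_X, Polynomial.derivative_mul, hp, Derivation.leibniz, pderiv_X,
      smul_eq_mul, map_add, mul_add, Finset.sum_add_distrib, Finset.sum_mul, Pi.single_apply]
    simp only [apply_ite (aeval γ), map_one, map_zero, mul_ite, mul_one, mul_zero,
      Finset.sum_ite_eq, Finset.mem_univ, if_true]
    rw [add_comm]
    exact congrArg₂ (· + ·) (mul_comm _ _) (Finset.sum_congr rfl fun _ _ => by ring)

theorem eval_aeval_polynomial {R σ : Type*} [CommRing R] (γ : σ → Polynomial R)
    (r : MvPolynomial σ R) (t : R) :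
    (aeval γ r).eval t = eval (fun i => (γ i).eval t) r := by
  rw [← Polynomial.coe_aeval_eq_eval, comp_aeval_apply, ← coe_aeval_eq_eval]
  rfl

variable {K : Type} [Field K] {N : ℕ}

theorem tangentSpaceAt_le_ker {J : Ideal (MvPolynomial (Fin N) K)} {f : MvPolynomial (Fin N) K}
    (hf : f ∈ J) (x : Fin N → K) : tangentSpaceAt J x ≤ LinearMap.ker (diffAt x f) :=
  (iInf_le _ f).trans (iInf_le _ hf)

theorem velocity_mem_tangentSpaceAt [Infinite K] {V : Set (Fin N → K)}
    (γ : Fin N → Polynomial K)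
    (hγ : ∀ t, (fun i => (γ i).eval t) ∈ V) (t : K) :
    (fun i => (derivative (γ i)).eval t) ∈
      tangentSpaceAt (vanishingIdeal K V) (fun i => (γ i).eval t) := by
  simp only [tangentSpaceAt, Submodule.mem_iInf, LinearMap.mem_ker]
  intro q hq
  have hzero : aeval γ q = 0 := Polynomial.funext fun s => by
    rw [eval_aeval_polynomial, Polynomial.eval_zero]
    exact mem_vanishingIdeal_iff.mp hq _ (hγ s)
  have := congr_arg (fun r => (derivative r).eval t) hzero
  simpa [diffAt, derivative_aeval, Polynomial.eval_finsetSum, eval_aeval_polynomial] using this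

theorem mem_tangentSpaceAt_of_line [Infinite K] {V : Set (Fin N → K)} (x w : Fin N → K)
    (hline : ∀ t : K, x + t • w ∈ V) : w ∈ tangentSpaceAt (vanishingIdeal K V) x := by
  have := velocity_mem_tangentSpaceAt (V := V)
    (fun i => Polynomial.C (x i) + Polynomial.C (w i) * Polynomial.X)
    (fun t => by
      convert hline t using 1
      ext i
      simp only [Polynomial.eval_add, Polynomial.eval_C, Polynomial.eval_mul, Polynomial.eval_X]
      simp [mul_comm]) 0
  simpa using this

theorem SmoothAt.tangentSpaceAt_eq_top {J : Ideal (MvPolynomial (Fin N) K)} {x y : Fin N → K}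
    (hx : SmoothAt J x) (hy : SmoothAt J y) (htop : tangentSpaceAt J x = ⊤) :
    tangentSpaceAt J y = ⊤ := by
  apply Submodule.eq_top_of_finrank_eq
  have : Module.finrank K (tangentSpaceAt J y) = Module.finrank K (tangentSpaceAt J x) := by
    exact_mod_cast hy.trans hx.symm
  rw [this, htop, finrank_top]

end TangentSpace

section SmoothSuspension

variable {K : Type} [Field K] {m : ℕ}

theorem cons_mem_susp_iff {P : MvPolynomial (Fin (m + 1)) K} {u v : K} {y : Fin (m + 1) → K} :
    (Fin.cons u (Fin.cons v y : Fin (m + 2) → K) : Fin (m + 3) → K) ∈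
      Susp Set.univ (X 0 * P) ↔ u * v = y 0 * eval y P := by
  simp only [Susp, Set.mem_univ, true_and, Set.mem_ofPred_eq, eval_mul, eval_X, Fin.cons_succ,
    Fin.cons_one, Fin.cons_zero]

theorem tangentSpaceAt_susp_ne_top {g : MvPolynomial (Fin (m + 1)) K} {x : Fin (m + 3) → K}
    (hx : x 1 ≠ 0) : tangentSpaceAt (vanishingIdeal K (Susp Set.univ g)) x ≠ ⊤ := by
  set f : MvPolynomial (Fin (m + 3)) K := X 0 * X 1 - rename (fun j => j.succ.succ) g
  have hf : f ∈ vanishingIdeal K (Susp Set.univ g) := by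
    refine mem_vanishingIdeal_iff.mpr fun q hq => ?_
    simp only [Susp, Set.mem_univ, true_and, Set.mem_ofPred_eq] at hq
    simp [f, eval_rename, hq, Function.comp_def]
  have hrename : pderiv 0 (rename (fun j : Fin (m + 1) => j.succ.succ) g) = 0 := by
    refine pderiv_eq_zero_of_notMem_vars fun h0 => ?_
    obtain ⟨j, -, hj⟩ := Finset.mem_image.mp (vars_rename _ g h0)
    exact Fin.succ_ne_zero _ hj
  have hdiff : diffAt x f (Pi.single 0 1) = x 1 := by
    simp [diffAt, f, Pi.single_apply, hrename]
  intro htop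
  have := tangentSpaceAt_le_ker hf x (htop ▸ Submodule.mem_top (x := Pi.single 0 1))
  exact hx (hdiff ▸ this)

theorem cons_cons_add_smul (u v t a b : K) (y z : Fin (m + 1) → K) :
    (Fin.cons u (Fin.cons v y : Fin (m + 2) → K) : Fin (m + 3) → K) +
        t • (Fin.cons a (Fin.cons b z : Fin (m + 2) → K) : Fin (m + 3) → K) =
      Fin.cons (u + t * a) (Fin.cons (v + t * b) (y + t • z)) := by
  ext i
  refine Fin.cases ?_ (Fin.cases ?_ fun j => ?_) i <;> simp

theorem tangentSpaceAt_susp_eq_top [Infinite K] {P : MvPolynomial (Fin (m + 1)) K}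
    {y : Fin (m + 1) → K} (hy : y 0 = 0) (hPy : eval y P = 0) :
    tangentSpaceAt (vanishingIdeal K (Susp Set.univ (X 0 * P)))
      (Fin.cons 0 (Fin.cons 0 y)) = ⊤ := by
  set T := tangentSpaceAt (vanishingIdeal K (Susp Set.univ (X 0 * P)))
    (Fin.cons 0 (Fin.cons 0 y))
  have horizontal (a : K) (z : Fin (m + 1) → K) (hz : z 0 = 0) :
      (Fin.cons a (Fin.cons 0 z) : Fin (m + 3) → K) ∈ T :=
    mem_tangentSpaceAt_of_line _ _ fun t => by
      rw [cons_cons_add_smul, cons_mem_susp_iff]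
      simp [hy, hz]
  have vertical : (Fin.cons 0 (Fin.cons 1 0) : Fin (m + 3) → K) ∈ T :=
    mem_tangentSpaceAt_of_line _ _ fun t => by
      rw [cons_cons_add_smul, cons_mem_susp_iff]
      simp [hy]
  -- lines in `X` give the directions with no `y₁`-component, the curve
  -- `t ↦ (P(y + t e₁), t, y + t e₁)` supplies the remaining one
  set e : Fin (m + 1) → K := Pi.single 0 1
  set ℓ : Fin (m + 1) → Polynomial K :=
    fun j => Polynomial.C (y j) + Polynomial.C (e j) * Polynomial.X
  set γ : Fin (m + 3) → Polynomial K := Fin.cons (aeval ℓ P) (Fin.cons Polynomial.X ℓ)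
  have transversal :
      (Fin.cons ((derivative (aeval ℓ P)).eval 0) (Fin.cons 1 e) : Fin (m + 3) → K) ∈ T := by
    have hℓ (t : K) : (fun j => (ℓ j).eval t) = y + t • e := by
      ext j
      simp only [ℓ, Polynomial.eval_add, Polynomial.eval_C, Polynomial.eval_mul,
        Polynomial.eval_X, Pi.add_apply, Pi.smul_apply, smul_eq_mul, mul_comm]
    have hγ (t : K) :
        (fun i => (γ i).eval t) = Fin.cons (eval (y + t • e) P) (Fin.cons t (y + t • e)) := by
      ext i
      refine Fin.cases ?_ (Fin.cases ?_ fun j => ?_) i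
      · simp [γ, eval_aeval_polynomial, hℓ]
      · simp [γ]
      · simp [γ, ← hℓ]
    have hγS (t : K) : (fun i => (γ i).eval t) ∈ Susp Set.univ (X 0 * P) := by
      rw [hγ, cons_mem_susp_iff]
      simp [e, hy, mul_comm]
    convert velocity_mem_tangentSpaceAt γ hγS 0 using 1
    · simp [T, hγ, hPy]
    · ext i
      refine Fin.cases ?_ (Fin.cases ?_ fun j => ?_) i <;> simp [γ, ℓ]
  refine Submodule.eq_top_iff'.mpr fun w => ?_
  set c := (derivative (aeval ℓ P)).eval 0
  set z : Fin (m + 1) → K := fun j => w j.succ.succ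
  have hw : w = Fin.cons (w 0 - z 0 * c) (Fin.cons 0 (z - z 0 • e)) +
      (w 1 - z 0) • Fin.cons 0 (Fin.cons 1 0) + z 0 • Fin.cons c (Fin.cons 1 e) := by
    ext i
    refine Fin.cases ?_ (Fin.cases ?_ fun j => ?_) i <;> simp [z, e]
  rw [hw]
  exact add_mem (add_mem (horizontal _ _ (by simp [e])) (T.smul_mem _ vertical))
    (T.smul_mem _ transversal)

theorem eval_ne_zero_of_forall_smoothAt [Infinite K] {P : MvPolynomial (Fin (m + 1)) K}
    (hsm : ∀ x ∈ Susp Set.univ (X 0 * P),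
      SmoothAt (vanishingIdeal K (Susp Set.univ (X 0 * P))) x)
    {y : Fin (m + 1) → K} (hy : y 0 = 0) : eval y P ≠ 0 := by
  intro hPy
  have hsing := hsm (Fin.cons 0 (Fin.cons 0 y)) (cons_mem_susp_iff.mpr (by simp [hy]))
  have hreg := hsm (Fin.cons 0 (Fin.cons 1 0)) (cons_mem_susp_iff.mpr (by simp))
  exact tangentSpaceAt_susp_ne_top (by simp)
    (hsing.tangentSpaceAt_eq_top hreg (tangentSpaceAt_susp_eq_top hy hPy))

end SmoothSuspension

section RegularFunctions

variable {K : Type} [Field K]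

theorem eval_aeval {R σ τ : Type*} [CommSemiring R] (F : τ → MvPolynomial σ R)
    (a : MvPolynomial τ R) (w : σ → R) :
    eval w (aeval F a) = eval (fun i => eval w (F i)) a := by
  induction a using MvPolynomial.induction_on <;> simp_all

theorem IsRegularOn.comp_eval {d e : ℕ} {V : Set (Fin e → K)} {W : Set (Fin d → K)}
    {φ : (Fin e → K) → K} (hφ : IsRegularOn V φ) (F : Fin e → MvPolynomial (Fin d) K)
    (hF : ∀ w ∈ W, (fun i => eval w (F i)) ∈ V) :
    IsRegularOn W fun w => φ (fun i => eval w (F i)) := by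
  intro w hw
  obtain ⟨a, b, hb, hab⟩ := hφ _ (hF w hw)
  refine ⟨aeval F a, aeval F b, by rwa [eval_aeval], fun w' hw' hb' => ?_⟩
  simp only [eval_aeval] at hb' ⊢
  exact hab _ (hF w' hw') hb'

-- The denominators have no common zero, so by the Nullstellensatz they generate the unit ideal.
theorem IsRegularOn.exists_eq_eval [IsAlgClosed K] {d : ℕ} {ψ : (Fin d → K) → K}
    (hψ : IsRegularOn Set.univ ψ) : ∃ Q : MvPolynomial (Fin d) K, ∀ w, ψ w = eval w Q := by
  choose a b hb hab using fun w => hψ w (Set.mem_univ w)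
  -- unlike `ψ b_w = a_w`, this holds also where `b_w` vanishes
  have hglobal (w w' : Fin d → K) : ψ w' * eval w' (b w ^ 2) = eval w' (a w * b w) := by
    by_cases hw' : eval w' (b w) = 0
    · simp [hw']
    · rw [map_pow, pow_two, ← mul_assoc, hab w w' (Set.mem_univ w') hw', eval_mul]
  have hspan : Ideal.span (Set.range fun w => b w ^ 2) = ⊤ := by
    have hempty : zeroLocus K (Ideal.span (Set.range fun w => b w ^ 2)) = ∅ :=
      Set.eq_empty_iff_forall_notMem.mpr fun w hw =>
        hb w (by simpa using hw _ (Ideal.subset_span (Set.mem_range_self w)))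
    have := vanishingIdeal_zeroLocus_eq_radical (K := K) (Ideal.span (Set.range fun w => b w ^ 2))
    rwa [hempty, vanishingIdeal_empty, eq_comm, Ideal.radical_eq_top] at this
  obtain ⟨c, hc⟩ := Finsupp.mem_span_range_iff_exists_finsupp.mp
    (hspan ▸ Submodule.mem_top : (1 : MvPolynomial (Fin d) K) ∈ Ideal.span _)
  refine ⟨c.sum fun w r => r * (a w * b w), fun w' => ?_⟩
  calc ψ w' = ψ w' * eval w' (c.sum fun w r => r • b w ^ 2) := by rw [hc, map_one, mul_one]
    _ = eval w' (c.sum fun w r => r * (a w * b w)) := by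
      simp only [Finsupp.sum, map_sum, Finset.mul_sum, smul_eq_mul, eval_mul]
      exact Finset.sum_congr rfl fun w _ => by rw [mul_left_comm, ← eval_mul, hglobal]

end RegularFunctions

section AffineChart

variable {K : Type} [Field K] {m : ℕ} (P : MvPolynomial (Fin (m + 1)) K)

/-- `X ∖ D`, in terms of `P = p₁ ⋯ p_d`. -/
def suspComplement : Set (Fin (m + 3) → K) :=
  {q | q 0 * q 1 = q 2 * eval (fun j => q j.succ.succ) P ∧
    (q 1 = 0 → eval (fun j => q j.succ.succ) P ≠ 0)}

open scoped Classical in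
noncomputable def hCoord (q : Fin (m + 3) → K) : K :=
  if q 1 = 0 then q 0 / eval (fun j => q j.succ.succ) P else q 2 / q 1

noncomputable def coordMapInvY : Fin (m + 1) → MvPolynomial (Fin (m + 2)) K :=
  Fin.cons (X 0 * X 1) fun j => X j.succ.succ

noncomputable def coordMapInv : Fin (m + 3) → MvPolynomial (Fin (m + 2)) K :=
  Fin.cons (X 0 * aeval coordMapInvY P) (Fin.cons (X 1) coordMapInvY)

variable {P}

theorem cons_mem_suspComplement_iff {u v : K} {y : Fin (m + 1) → K} :
    (Fin.cons u (Fin.cons v y : Fin (m + 2) → K) : Fin (m + 3) → K) ∈ suspComplement P ↔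
      u * v = y 0 * eval y P ∧ (v = 0 → eval y P ≠ 0) := by
  simp [suspComplement]

open scoped Classical in
theorem hCoord_cons (u v : K) (y : Fin (m + 1) → K) :
    hCoord P (Fin.cons u (Fin.cons v y : Fin (m + 2) → K)) =
      if v = 0 then u / eval y P else y 0 / v := by
  simp [hCoord]

theorem hCoord_mul_apply_one {q : Fin (m + 3) → K} (hq : q ∈ suspComplement P) :
    hCoord P q * q 1 = q 2 := by
  obtain ⟨hrel, hD⟩ := hq
  by_cases hv : q 1 = 0
  · have hy₁ : q 2 = 0 := by simpa [hv, hD hv] using hrel.symm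
    rw [hv, hy₁, mul_zero]
  · simp [hCoord, hv]

theorem hCoord_mul_eval {q : Fin (m + 3) → K} (hq : q ∈ suspComplement P) :
    hCoord P q * eval (fun j => q j.succ.succ) P = q 0 := by
  obtain ⟨hrel, hD⟩ := hq
  by_cases hv : q 1 = 0
  · simp [hCoord, hv, hD hv]
  · simp only [hCoord, if_neg hv]
    rw [div_mul_eq_mul_div, ← hrel, mul_div_cancel_right₀ _ hv]

theorem isRegularOn_hCoord : IsRegularOn (suspComplement P) (hCoord P) := by
  intro q hq
  by_cases hv : q 1 = 0
  · refine ⟨X 0, rename (fun j => j.succ.succ) P,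
      by simpa [eval_rename, Function.comp_def] using hq.2 hv, fun q' hq' _ => ?_⟩
    simpa [eval_rename, Function.comp_def] using hCoord_mul_eval hq'
  · exact ⟨X 2, X 1, by simpa using hv, fun q' hq' _ => by simpa using hCoord_mul_apply_one hq'⟩

theorem eval_coordMapInvY (w : Fin (m + 2) → K) :
    (fun j => eval w (coordMapInvY j)) = Fin.cons (w 0 * w 1) fun j => w j.succ.succ := by
  ext j
  refine Fin.cases ?_ (fun j => ?_) j <;> simp [coordMapInvY]

theorem eval_coordMapInv (w : Fin (m + 2) → K) :
    (fun i => eval w (coordMapInv P i)) =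
      Fin.cons (w 0 * eval (Fin.cons (w 0 * w 1) fun j => w j.succ.succ) P)
        (Fin.cons (w 1) (Fin.cons (w 0 * w 1) fun j => w j.succ.succ)) := by
  ext i
  refine Fin.cases ?_ (Fin.cases ?_ fun j => ?_) i
  · simp only [coordMapInv, Fin.cons_zero, eval_mul, eval_X, eval_aeval, eval_coordMapInvY]
  · simp [coordMapInv]
  · simpa [coordMapInv] using congrFun (eval_coordMapInvY w) j

theorem coordMapInv_mem (hP : ∀ y : Fin (m + 1) → K, y 0 = 0 → eval y P ≠ 0)
    (w : Fin (m + 2) → K) : (fun i => eval w (coordMapInv P i)) ∈ suspComplement P := by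
  rw [eval_coordMapInv, cons_mem_suspComplement_iff]
  refine ⟨by simp; ring, fun hv => hP _ (by simp [hv])⟩

theorem coordMap_coordMapInv (hP : ∀ y : Fin (m + 1) → K, y 0 = 0 → eval y P ≠ 0)
    (w : Fin (m + 2) → K) : coordMap (hCoord P) (fun i => eval w (coordMapInv P i)) = w := by
  rw [eval_coordMapInv]
  ext i
  refine Fin.cases ?_ (Fin.cases ?_ fun j => ?_) i
  · by_cases hv : w 1 = 0
    · simp [coordMap, hCoord_cons, hv, hP (Fin.cons 0 fun j => w j.succ.succ) rfl]
    · simp [coordMap, hCoord_cons, hv]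
  · simp [coordMap]
  · simp [coordMap]

theorem coordMapInv_coordMap {q : Fin (m + 3) → K} (hq : q ∈ suspComplement P) :
    (fun i => eval (coordMap (hCoord P) q) (coordMapInv P i)) = q := by
  have hy : (Fin.cons (hCoord P q * q 1) fun j : Fin m => q j.succ.succ.succ) =
      fun j : Fin (m + 1) => q j.succ.succ := by
    rw [hCoord_mul_apply_one hq]
    ext j
    exact Fin.cases rfl (fun _ => rfl) j
  rw [eval_coordMapInv]
  ext i
  refine Fin.cases ?_ (Fin.cases ?_ fun j => ?_) i
  · simp [coordMap, hy, hCoord_mul_eval hq]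
  · simp [coordMap]
  · simpa [coordMap] using congrFun hy j

end AffineChart

theorem hypersurface_complement_affine_space_general
    {K : Type} [Field K] [IsAlgClosed K] {m d : ℕ}
    (p : Fin d → MvPolynomial (Fin (m + 1)) K)
    (X : Set (Fin (m + 3) → K))
    (hX : X = Susp (Set.univ : Set (Fin (m + 1) → K)) (MvPolynomial.X 0 * ∏ i, p i))
    (hsm : ∀ x ∈ X, SmoothAt (vanishingIdeal K X) x)
    (D : Set (Fin (m + 3) → K))
    (hD : D = {q ∈ X | q 1 = 0 ∧
      ∃ i : Fin d, eval (fun j : Fin (m + 1) => q j.succ.succ) (p i) = 0})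
    (U : Set (Fin (m + 3) → K)) (hU : U = X \ D) :
    ∃ h : (Fin (m + 3) → K) → K,
      IsRegularOn U h ∧
      (∀ q ∈ U, h q * q 1 = q 2) ∧
      (∀ q ∈ U, h q * ∏ i, eval (fun j : Fin (m + 1) => q j.succ.succ) (p i) = q 0) ∧
      (∀ φ : (Fin (m + 3) → K) → K, IsRegularOn U φ →
        ∃ P : MvPolynomial (Fin (m + 2)) K, ∀ q ∈ U, φ q = eval (coordMap h q) P) ∧
      (∃ G : Fin (m + 3) → MvPolynomial (Fin (m + 2)) K,
        (∀ w : Fin (m + 2) → K, (fun i => eval w (G i)) ∈ U) ∧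
        (∀ q ∈ U, (fun i => eval (coordMap h q) (G i)) = q) ∧
        (∀ w : Fin (m + 2) → K, coordMap h (fun i => eval w (G i)) = w)) := by
  set P := ∏ i, p i
  have hP : ∀ y : Fin (m + 1) → K, y 0 = 0 → eval y P ≠ 0 := fun y hy =>
    eval_ne_zero_of_forall_smoothAt (hX ▸ hsm) hy
  obtain rfl : U = suspComplement P := by
    ext q
    simp [hU, hD, hX, Susp, suspComplement, P, Finset.prod_eq_zero_iff]
    tauto
  refine ⟨hCoord P, isRegularOn_hCoord, fun q hq => hCoord_mul_apply_one hq,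
    fun q hq => by simpa [P, map_prod] using hCoord_mul_eval hq, fun φ hφ => ?_,
    coordMapInv P, coordMapInv_mem hP, fun q hq => coordMapInv_coordMap hq,
    coordMap_coordMapInv hP⟩
  obtain ⟨Q, hQ⟩ :=
    (hφ.comp_eval (coordMapInv P) fun w _ => coordMapInv_mem hP w).exists_eq_eval
  exact ⟨Q, fun q hq => by rw [← hQ, coordMapInv_coordMap hq]⟩

/-- for the smooth hypersurface `X = {uv = y₁ p₁(y) ⋯ p_d(y)} ⊆ 𝔸^{n+1}`
(with `n = m + 2`, i.e. `m + 1` variables `y`), `D = ⋃_i {v = 0, p_i = 0}` and `U = X ∖ D`,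
the function `h = u/(p₁(y)⋯p_d(y)) = y₁/v` is regular on `U`, the algebra `K[U]` is
generated by the `n` functions `h, v, y₂, …, y_{n-1}`, and these functions define an
isomorphism of `U` onto the affine space `𝔸^n` (whose polynomial inverse is `G`); in
particular `U` is an affine variety. Ambient coordinates are
`(u, v, y₁, …, y_{n-1}) = (q 0, q 1, q 2, …)`. -/
theorem hypersurface_complement_affine_space
    {K : Type} [Field K] [IsAlgClosed K] [CharZero K] {m d : ℕ}
    (p : Fin d → MvPolynomial (Fin (m + 1)) K)
    (hirr : ∀ i, Irreducible (p i))
    (X : Set (Fin (m + 3) → K))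
    (hX : X = Susp (Set.univ : Set (Fin (m + 1) → K)) (MvPolynomial.X 0 * ∏ i, p i))
    (hsm : ∀ x ∈ X, SmoothAt (vanishingIdeal K X) x)
    (D : Set (Fin (m + 3) → K))
    (hD : D = {q ∈ X | q 1 = 0 ∧
      ∃ i : Fin d, eval (fun j : Fin (m + 1) => q j.succ.succ) (p i) = 0})
    (U : Set (Fin (m + 3) → K)) (hU : U = X \ D) :
    ∃ h : (Fin (m + 3) → K) → K,
      IsRegularOn U h ∧
      (∀ q ∈ U, h q * q 1 = q 2) ∧
      (∀ q ∈ U, h q * ∏ i, eval (fun j : Fin (m + 1) => q j.succ.succ) (p i) = q 0) ∧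
      (∀ φ : (Fin (m + 3) → K) → K, IsRegularOn U φ →
        ∃ P : MvPolynomial (Fin (m + 2)) K, ∀ q ∈ U, φ q = eval (coordMap h q) P) ∧
      (∃ G : Fin (m + 3) → MvPolynomial (Fin (m + 2)) K,
        (∀ w : Fin (m + 2) → K, (fun i => eval w (G i)) ∈ U) ∧
        (∀ q ∈ U, (fun i => eval (coordMap h q) (G i)) = q) ∧
        (∀ w : Fin (m + 2) → K, coordMap h (fun i => eval w (G i)) = w)) :=
  hypersurface_complement_affine_space_general p X hX hsm D hD U hU

end ArzhZai
end
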